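/- arXiv:1401.3015 — 5 statements merged into one kernel-verified Lean document; each statement's English description precedes it below -/
import Mathlib

section
/- Let α_h, α_v ∈ (0,1), Q_h(x,y) = α_h‖x‖² − ‖y‖², Q_v(x,y) = ‖x‖² − α_v‖y‖², and N = B̄_u × B̄_s. Suppose f satisfies the (Q_v, m_v) cone condition on N (i.e. Q_v(f(p₁)−f(p₂)) > m_v Q_v(p₁−p₂) for p₁ ≠ p₂ ∈ N) with m_v > 1, f(0) = 0, and (q₀, q₋₁, q₋₂, …) is a backward trajectory of f contained in {Q_h ≥ 0} ∩ N. Then for C = √(2(1 − α_v α_h)⁻¹) and all k ≤ 0, ‖q_k‖ ≤ C (√m_v)^k. -/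
theorem stmt_5 (u s : ℕ) (αh αv mv : ℝ)
    (hαh : αh ∈ Set.Ioo (0:ℝ) 1) (hαv : αv ∈ Set.Ioo (0:ℝ) 1) (hmv : 1 < mv)
    (f : EuclideanSpace ℝ (Fin u) × EuclideanSpace ℝ (Fin s) →
      EuclideanSpace ℝ (Fin u) × EuclideanSpace ℝ (Fin s))
    -- N = closed unit ball × closed unit ball
    (N : Set (EuclideanSpace ℝ (Fin u) × EuclideanSpace ℝ (Fin s)))
    (hNdef : N = (Metric.closedBall 0 1) ×ˢ (Metric.closedBall 0 1))
    -- cone condition for (Q_v, m_v)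
    (hcone : ∀ p₁ ∈ N, ∀ p₂ ∈ N, p₁ ≠ p₂ →
      (‖(f p₁ - f p₂).1‖ ^ 2 - αv * ‖(f p₁ - f p₂).2‖ ^ 2) >
        mv * (‖(p₁ - p₂).1‖ ^ 2 - αv * ‖(p₁ - p₂).2‖ ^ 2))
    (hf0 : f 0 = 0)
    -- backward trajectory (q 0, q 1, q 2, ...) = (q₀, q₋₁, q₋₂, …) in {Q_h ≥ 0} ∩ N
    (q : ℕ → EuclideanSpace ℝ (Fin u) × EuclideanSpace ℝ (Fin s))
    (hqN : ∀ n, q n ∈ N)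
    (hqQh : ∀ n, αh * ‖(q n).1‖ ^ 2 - ‖(q n).2‖ ^ 2 ≥ 0)
    (hqtraj : ∀ n, f (q (n + 1)) = q n) :
    -- ‖q_k‖ ≤ C (√m_v)^k for k ≤ 0, i.e. ‖q n‖ ≤ C (√m_v)^{-n}
    ∀ n : ℕ, Real.sqrt (‖(q n).1‖ ^ 2 + ‖(q n).2‖ ^ 2) ≤
      Real.sqrt (2 * (1 - αv * αh)⁻¹) * (Real.sqrt mv) ^ (-(n : ℤ)) := by
  obtain ⟨hαh0, hαh1⟩ := hαh
  obtain ⟨hαv0, hαv1⟩ := hαv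
  have hmv0 : (0:ℝ) < mv := lt_trans one_pos hmv
  have h1 : (0:ℝ) < 1 - αv * αh := by nlinarith
  have h0N : (0 : EuclideanSpace ℝ (Fin u) × EuclideanSpace ℝ (Fin s)) ∈ N := by
    rw [hNdef]
    constructor <;> simp
  -- key: Q_v (q n) ≤ mv⁻¹ ^ n
  have key : ∀ n, ‖(q n).1‖ ^ 2 - αv * ‖(q n).2‖ ^ 2 ≤ mv⁻¹ ^ n := by
    intro n; induction n with
    | zero =>
      have h := hqN 0
      rw [hNdef] at h
      have h1' : ‖(q 0).1‖ ≤ 1 := by simpa using h.1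
      have h2 : (0:ℝ) ≤ ‖(q 0).2‖ := norm_nonneg _
      simp only [pow_zero]
      nlinarith [norm_nonneg (q 0).1]
    | succ n ih =>
      have hQn : 0 ≤ ‖(q (n+1)).1‖ ^ 2 - αv * ‖(q (n+1)).2‖ ^ 2 := by
        have := hqQh (n+1)
        nlinarith [norm_nonneg (q (n+1)).1]
      by_cases hz : q (n+1) = 0
      · rw [hz]
        simpa using le_of_lt (pow_pos (inv_pos.mpr hmv0) (n+1))
      · have h := hcone (q (n+1)) (hqN _) 0 h0N hz
        rw [hf0, sub_zero, sub_zero, hqtraj n] at h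
        have hpow : mv⁻¹ ^ (n+1) = mv⁻¹ ^ n * mv⁻¹ := pow_succ _ _
        rw [hpow]
        have hmvinv : mv * mv⁻¹ = 1 := mul_inv_cancel₀ (ne_of_gt hmv0)
        nlinarith [pow_pos (inv_pos.mpr hmv0) n]
  intro n
  have hx := hqQh n
  have hQ := key n
  -- rewrite RHS as a single sqrt
  have hrw : Real.sqrt (2 * (1 - αv * αh)⁻¹) * (Real.sqrt mv) ^ (-(n : ℤ)) =
      Real.sqrt (2 * (1 - αv * αh)⁻¹ * mv⁻¹ ^ n) := by
    have hsq : ∀ k : ℕ, Real.sqrt mv ^ k = Real.sqrt (mv ^ k) := by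
      intro k; induction k with
      | zero => simp
      | succ k ih => rw [pow_succ, pow_succ, ih, ← Real.sqrt_mul (by positivity)]
    rw [zpow_neg, zpow_natCast, hsq, ← Real.sqrt_inv, ← Real.sqrt_mul (by positivity), inv_pow]
  rw [hrw]
  apply Real.sqrt_le_sqrt
  -- main inequality
  have hxy : ‖(q n).2‖ ^ 2 ≤ αh * ‖(q n).1‖ ^ 2 := by linarith
  have hQpos : (1 - αv * αh) * ‖(q n).1‖ ^ 2 ≤ ‖(q n).1‖ ^ 2 - αv * ‖(q n).2‖ ^ 2 := by
    nlinarith [norm_nonneg (q n).1]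
  have hnorm : ‖(q n).1‖ ^ 2 + ‖(q n).2‖ ^ 2 ≤ 2 * ‖(q n).1‖ ^ 2 := by
    nlinarith [norm_nonneg (q n).1]
  have hinv : (1 - αv * αh) * (2 * (1 - αv * αh)⁻¹ * mv⁻¹ ^ n) = 2 * mv⁻¹ ^ n := by
    field_simp
  nlinarith [mul_pos h1 h1, norm_nonneg (q n).1, pow_pos (inv_pos.mpr hmv0) n,
    mul_le_mul_of_nonneg_left hQ (le_of_lt h1)]
end

section
/- Let α_h, α_v ∈ (0,1), Q_h(x,y) = α_h‖x‖² − ‖y‖², Q_v(x,y) = ‖x‖² − α_v‖y‖², and N = B̄_u × B̄_s. Suppose f satisfies the (Q_h, m_h) cone condition on N with m_h > 0, f(0) = 0, and q₀ ∈ N satisfies f^k(q₀) ∈ {Q_v ≤ 0} ∩ N for all k ≥ 0. Then for C = √(2(1 − α_v α_h)⁻¹) and all k ≥ 0, ‖f^k(q₀)‖ ≤ C(√m_h)^k. -/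
lemma sqrt_pow_aux (x : ℝ) (hx : 0 ≤ x) : ∀ k : ℕ, Real.sqrt (x ^ k) = Real.sqrt x ^ k := by
  intro k
  induction k with
  | zero => simp
  | succ n ihn => rw [pow_succ', Real.sqrt_mul hx, ihn, pow_succ']


theorem stmt_6 (u s : ℕ) (αh αv mh : ℝ)
    (hαh : αh ∈ Set.Ioo (0:ℝ) 1) (hαv : αv ∈ Set.Ioo (0:ℝ) 1) (hmh : 0 < mh)
    (f : EuclideanSpace ℝ (Fin u) × EuclideanSpace ℝ (Fin s) →
      EuclideanSpace ℝ (Fin u) × EuclideanSpace ℝ (Fin s))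
    (N : Set (EuclideanSpace ℝ (Fin u) × EuclideanSpace ℝ (Fin s)))
    (hNdef : N = (Metric.closedBall 0 1) ×ˢ (Metric.closedBall 0 1))
    -- cone condition for (Q_h, m_h)
    (hcone : ∀ p₁ ∈ N, ∀ p₂ ∈ N, p₁ ≠ p₂ →
      (αh * ‖(f p₁ - f p₂).1‖ ^ 2 - ‖(f p₁ - f p₂).2‖ ^ 2) >
        mh * (αh * ‖(p₁ - p₂).1‖ ^ 2 - ‖(p₁ - p₂).2‖ ^ 2))
    (hf0 : f 0 = 0)
    (q₀ : EuclideanSpace ℝ (Fin u) × EuclideanSpace ℝ (Fin s))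
    (hq₀ : q₀ ∈ N)
    (hforward : ∀ k : ℕ, f^[k] q₀ ∈ N ∧
      ‖(f^[k] q₀).1‖ ^ 2 - αv * ‖(f^[k] q₀).2‖ ^ 2 ≤ 0) :
    ∀ k : ℕ, Real.sqrt (‖(f^[k] q₀).1‖ ^ 2 + ‖(f^[k] q₀).2‖ ^ 2) ≤
      Real.sqrt (2 * (1 - αv * αh)⁻¹) * (Real.sqrt mh) ^ k := by
  obtain ⟨hαh0, hαh1⟩ := hαh
  obtain ⟨hαv0, hαv1⟩ := hαv
  have hC : (0:ℝ) < 1 - αv * αh := by nlinarith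
  have h0N : (0 : EuclideanSpace ℝ (Fin u) × EuclideanSpace ℝ (Fin s)) ∈ N := by
    rw [hNdef]
    constructor <;> simp
  -- a k = -Q_h (f^[k] q₀)
  set a : ℕ → ℝ := fun k => ‖(f^[k] q₀).2‖ ^ 2 - αh * ‖(f^[k] q₀).1‖ ^ 2 with ha
  have hanneg : ∀ k, 0 ≤ a k := by
    intro k
    have h1 := (hforward k).2
    simp only [ha]
    nlinarith [sq_nonneg ‖(f^[k] q₀).2‖]
  have ha0 : a 0 ≤ 1 := by
    have : q₀.2 ∈ Metric.closedBall (0 : EuclideanSpace ℝ (Fin s)) 1 := by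
      rw [hNdef] at hq₀; exact hq₀.2
    have h2 : ‖q₀.2‖ ≤ 1 := by simpa using this
    simp only [ha, Function.iterate_zero_apply]
    nlinarith [sq_nonneg ‖q₀.1‖, norm_nonneg q₀.2]
  have key : ∀ k, a k ≤ mh ^ k * a 0 := by
    intro k
    induction k with
    | zero => simp
    | succ n ih =>
      by_cases h : f^[n] q₀ = 0
      · have hnext : f^[n+1] q₀ = 0 := by
          rw [Function.iterate_succ_apply', h, hf0]
        have : a (n+1) = 0 := by simp [ha, hnext]
        rw [this]
        exact mul_nonneg (pow_nonneg hmh.le _) (hanneg 0)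
      · have hc := hcone (f^[n] q₀) (hforward n).1 0 h0N h
        rw [hf0, sub_zero, sub_zero, ← Function.iterate_succ_apply' f n q₀] at hc
        have : a (n+1) < mh * a n := by simp only [ha]; nlinarith
        calc a (n+1) ≤ mh * a n := le_of_lt this
          _ ≤ mh * (mh ^ n * a 0) := by nlinarith
          _ = mh ^ (n+1) * a 0 := by ring
  intro k
  have hbound : ‖(f^[k] q₀).1‖ ^ 2 + ‖(f^[k] q₀).2‖ ^ 2 ≤ 2 * (1 - αv * αh)⁻¹ * mh ^ k := by
    have hv := (hforward k).2
    have hk := key k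
    have hy : (1 - αv * αh) * ‖(f^[k] q₀).2‖ ^ 2 ≤ a k := by
      simp only [ha]; nlinarith
    have hmk : (0:ℝ) < mh ^ k := pow_pos hmh k
    have h2 : ‖(f^[k] q₀).1‖ ^ 2 + ‖(f^[k] q₀).2‖ ^ 2 ≤ 2 * ‖(f^[k] q₀).2‖ ^ 2 := by
      nlinarith [sq_nonneg ‖(f^[k] q₀).2‖]
    have hinv : (0:ℝ) < (1 - αv * αh)⁻¹ := inv_pos.mpr hC
    have h4 : (1 - αv * αh) * ‖(f^[k] q₀).2‖ ^ 2 ≤ mh ^ k := by nlinarith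
    have h3 : ‖(f^[k] q₀).2‖ ^ 2 ≤ (1 - αv * αh)⁻¹ * mh ^ k := by
      have := mul_le_mul_of_nonneg_left h4 (le_of_lt hinv)
      rw [← mul_assoc, inv_mul_cancel₀ (ne_of_gt hC), one_mul] at this
      exact this
    linarith
  calc Real.sqrt (‖(f^[k] q₀).1‖ ^ 2 + ‖(f^[k] q₀).2‖ ^ 2)
      ≤ Real.sqrt (2 * (1 - αv * αh)⁻¹ * mh ^ k) := Real.sqrt_le_sqrt hbound
    _ = Real.sqrt (2 * (1 - αv * αh)⁻¹) * Real.sqrt (mh ^ k) := by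
        rw [Real.sqrt_mul (by positivity)]
    _ = Real.sqrt (2 * (1 - αv * αh)⁻¹) * (Real.sqrt mh) ^ k := by
        rw [sqrt_pow_aux mh hmh.le k]
end

section
/- Let Q(x,y) = α‖x‖² − β‖y‖² with α, β > 0, c* > 0, and define φ : ℝ^u × ℝ^s → ℝ^u × ℝ^s by φ(u,s) = (u √((c* + β‖s‖²)/α), s) if ‖u‖ ≤ 1, and φ(u,s) = (u[(√((c* + β‖s‖²)/α) − 1)/‖u‖ + 1], s) if ‖u‖ > 1. Then for all u ∈ ℝ^u and s₁, s₂ ∈ ℝ^s, Q(φ(u,s₁) − φ(u,s₂)) ≤ 0. -/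
/-- The straightening change of coordinates φ. -/
noncomputable def straighten (u s : ℕ) (α β cstar : ℝ)
    (p : EuclideanSpace ℝ (Fin u) × EuclideanSpace ℝ (Fin s)) :
    EuclideanSpace ℝ (Fin u) × EuclideanSpace ℝ (Fin s) :=
  if ‖p.1‖ ≤ 1 then
    (Real.sqrt ((cstar + β * ‖p.2‖ ^ 2) / α) • p.1, p.2)
  else
    (((Real.sqrt ((cstar + β * ‖p.2‖ ^ 2) / α) - 1) / ‖p.1‖ + 1) • p.1, p.2)

/-- Lipschitz-type bound for the scaling factor. -/
lemma straighten_key (α β cstar a b : ℝ) (hα : 0 < α) (hβ : 0 < β) (hc : 0 < cstar)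
    (ha0 : 0 ≤ a) (hb0 : 0 ≤ b) :
    α * (Real.sqrt ((cstar + β * a ^ 2) / α) - Real.sqrt ((cstar + β * b ^ 2) / α)) ^ 2
      ≤ β * (a - b) ^ 2 := by
  set f₁ := Real.sqrt ((cstar + β * a ^ 2) / α) with hf1def
  set f₂ := Real.sqrt ((cstar + β * b ^ 2) / α) with hf2def
  have hf₁ : f₁ ^ 2 = (cstar + β * a ^ 2) / α := Real.sq_sqrt (by positivity)
  have hf₂ : f₂ ^ 2 = (cstar + β * b ^ 2) / α := Real.sq_sqrt (by positivity)
  have hf₁0 : 0 ≤ f₁ := Real.sqrt_nonneg _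
  have hf₂0 : 0 ≤ f₂ := Real.sqrt_nonneg _
  have hsq : (α * (f₁ * f₂)) ^ 2 = (cstar + β * a ^ 2) * (cstar + β * b ^ 2) := by
    have h : (α * (f₁ * f₂)) ^ 2 = α ^ 2 * f₁ ^ 2 * f₂ ^ 2 := by ring
    rw [h, hf₁, hf₂]; field_simp
  have hprod : cstar + β * (a * b) ≤ α * (f₁ * f₂) := by
    have hL0 : 0 ≤ cstar + β * (a * b) := by positivity
    have hR0 : 0 ≤ α * (f₁ * f₂) := by positivity
    have h : (cstar + β * (a * b)) ^ 2 ≤ (α * (f₁ * f₂)) ^ 2 := by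
      rw [hsq]
      nlinarith [mul_nonneg (mul_nonneg hc.le hβ.le) (sq_nonneg (a - b))]
    exact le_of_pow_le_pow_left₀ two_ne_zero hR0 h
  have e1 : α * f₁ ^ 2 = cstar + β * a ^ 2 := by rw [hf₁]; field_simp
  have e2 : α * f₂ ^ 2 = cstar + β * b ^ 2 := by rw [hf₂]; field_simp
  nlinarith [hprod]

set_option maxHeartbeats 1000000 in
theorem stmt_10 (u s : ℕ) (α β cstar : ℝ) (hα : 0 < α) (hβ : 0 < β) (hc : 0 < cstar)
    (x : EuclideanSpace ℝ (Fin u)) (s₁ s₂ : EuclideanSpace ℝ (Fin s)) :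
    α * ‖(straighten u s α β cstar (x, s₁) - straighten u s α β cstar (x, s₂)).1‖ ^ 2 -
      β * ‖(straighten u s α β cstar (x, s₁) - straighten u s α β cstar (x, s₂)).2‖ ^ 2 ≤ 0 := by
  have hkey := straighten_key α β cstar ‖s₁‖ ‖s₂‖ hα hβ hc (norm_nonneg _) (norm_nonneg _)
  set f₁ := Real.sqrt ((cstar + β * ‖s₁‖ ^ 2) / α) with hf1def
  set f₂ := Real.sqrt ((cstar + β * ‖s₂‖ ^ 2) / α) with hf2def
  have hnorm : (‖s₁‖ - ‖s₂‖) ^ 2 ≤ ‖s₁ - s₂‖ ^ 2 := by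
    have h1 : |‖s₁‖ - ‖s₂‖| ≤ ‖s₁ - s₂‖ := abs_norm_sub_norm_le s₁ s₂
    calc (‖s₁‖ - ‖s₂‖) ^ 2 = |‖s₁‖ - ‖s₂‖| ^ 2 := (sq_abs _).symm
      _ ≤ ‖s₁ - s₂‖ ^ 2 := by nlinarith [abs_nonneg (‖s₁‖ - ‖s₂‖)]
  have h2 : ‖f₁ - f₂‖ ^ 2 = (f₁ - f₂) ^ 2 := by rw [Real.norm_eq_abs, sq_abs]
  unfold straighten
  by_cases hx : ‖x‖ ≤ 1
  · simp only [hx, if_pos, Prod.fst_sub, Prod.snd_sub]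
    rw [← sub_smul, norm_smul]
    have hxx : ‖x‖ ^ 2 ≤ 1 := by nlinarith [norm_nonneg x]
    have hle : (‖f₁ - f₂‖ * ‖x‖) ^ 2 ≤ (f₁ - f₂) ^ 2 := by
      calc (‖f₁ - f₂‖ * ‖x‖) ^ 2 = ‖f₁ - f₂‖ ^ 2 * ‖x‖ ^ 2 := by ring
        _ ≤ ‖f₁ - f₂‖ ^ 2 * 1 := by nlinarith [sq_nonneg ‖f₁ - f₂‖]
        _ = (f₁ - f₂) ^ 2 := by rw [mul_one, h2]
    nlinarith [hkey, hnorm, hβ.le]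
  · simp only [hx, if_neg, if_false, Prod.fst_sub, Prod.snd_sub]
    have hx1 : (1:ℝ) < ‖x‖ := lt_of_not_ge hx
    have hx0 : ‖x‖ ≠ 0 := by positivity
    rw [← sub_smul, norm_smul]
    have hco : (f₁ - 1) / ‖x‖ + 1 - ((f₂ - 1) / ‖x‖ + 1) = (f₁ - f₂) / ‖x‖ := by
      field_simp
      ring
    rw [hco]
    have heq : ‖(f₁ - f₂) / ‖x‖‖ * ‖x‖ = ‖f₁ - f₂‖ := by
      rw [norm_div, norm_norm, div_mul_cancel₀ _ hx0]
    rw [heq]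
    nlinarith [hkey, hnorm, hβ.le]
end

section
/- Suppose f : N → ℝ^u × ℝ^s is continuous, f(0) = 0, satisfies the (Q,m) cone condition on N = B̄_u × B̄_s, and h : B̄_u → N is a Q-horizontal disc of radius c > 0, where Q(x,y) = α‖x‖² − β‖y‖². Then for every c* ∈ (0, mc], for each x ∈ ∂B_u and each λ ∈ [0,1], setting h_λ(x) := (π_x h(x), λ π_y h(x)), one has Q(f(h_λ(x))) > c*. -/
theorem stmt_11 (u s : ℕ) (α β m c : ℝ) (hα : 0 < α) (hβ : 0 < β) (hm : 0 < m) (hc : 0 < c)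
    (f : EuclideanSpace ℝ (Fin u) × EuclideanSpace ℝ (Fin s) →
      EuclideanSpace ℝ (Fin u) × EuclideanSpace ℝ (Fin s))
    (N : Set (EuclideanSpace ℝ (Fin u) × EuclideanSpace ℝ (Fin s)))
    (hNdef : N = (Metric.closedBall 0 1) ×ˢ (Metric.closedBall 0 1))
    (hfcont : ContinuousOn f N) (hf0 : f 0 = 0)
    -- cone condition for (Q, m)
    (hcone : ∀ p₁ ∈ N, ∀ p₂ ∈ N, p₁ ≠ p₂ →
      α * ‖(f p₁ - f p₂).1‖ ^ 2 - β * ‖(f p₁ - f p₂).2‖ ^ 2 >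
        m * (α * ‖(p₁ - p₂).1‖ ^ 2 - β * ‖(p₁ - p₂).2‖ ^ 2))
    -- h is a Q-horizontal disc of radius c, with values in N
    (h : EuclideanSpace ℝ (Fin u) → EuclideanSpace ℝ (Fin u) × EuclideanSpace ℝ (Fin s))
    (hcont : ContinuousOn h (Metric.closedBall 0 1))
    (hmaps : Set.MapsTo h (Metric.closedBall 0 1) N)
    (hhQ : ∀ x₁ ∈ Metric.closedBall (0 : EuclideanSpace ℝ (Fin u)) 1,
      ∀ x₂ ∈ Metric.closedBall (0 : EuclideanSpace ℝ (Fin u)) 1, x₁ ≠ x₂ →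
        α * ‖(h x₁ - h x₂).1‖ ^ 2 - β * ‖(h x₁ - h x₂).2‖ ^ 2 > 0)
    (hh0 : (h 0).1 = 0)
    (hrad : ∀ x ∈ Metric.sphere (0 : EuclideanSpace ℝ (Fin u)) 1,
      α * ‖(h x).1‖ ^ 2 - β * ‖(h x).2‖ ^ 2 = c) :
    ∀ cstar ∈ Set.Ioc 0 (m * c), ∀ x ∈ Metric.sphere (0 : EuclideanSpace ℝ (Fin u)) 1,
      ∀ lam ∈ Set.Icc (0:ℝ) 1,
        α * ‖(f ((h x).1, lam • (h x).2)).1‖ ^ 2 -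
          β * ‖(f ((h x).1, lam • (h x).2)).2‖ ^ 2 > cstar := by
  intro cstar hcstar x hx lam hlam
  have hxb : x ∈ Metric.closedBall (0 : EuclideanSpace ℝ (Fin u)) 1 :=
    Metric.sphere_subset_closedBall hx
  have hhxN := hmaps hxb
  rw [hNdef] at hhxN
  obtain ⟨h1, h2⟩ := hhxN
  simp only [Metric.mem_closedBall, dist_zero_right] at h1 h2
  obtain ⟨hl0, hl1⟩ := hlam
  have hrc := hrad x hx
  set p : EuclideanSpace ℝ (Fin u) × EuclideanSpace ℝ (Fin s) :=
    ((h x).1, lam • (h x).2) with hp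
  have hnorm2 : ‖p.2‖ = lam * ‖(h x).2‖ := by
    rw [hp, norm_smul, Real.norm_eq_abs, abs_of_nonneg hl0]
  have hQp : α * ‖p.1‖ ^ 2 - β * ‖p.2‖ ^ 2 ≥ c := by
    rw [← hrc, hnorm2, hp]
    have : β * (lam * ‖(h x).2‖) ^ 2 ≤ β * ‖(h x).2‖ ^ 2 := by
      apply mul_le_mul_of_nonneg_left _ hβ.le
      rw [mul_pow]
      nlinarith [sq_nonneg ‖(h x).2‖, mul_le_mul hl1 hl1 hl0 zero_le_one]
    simp only
    linarith
  have hpN : p ∈ N := by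
    rw [hNdef]
    constructor <;> simp only [Metric.mem_closedBall, dist_zero_right]
    · exact h1
    · rw [hnorm2]
      nlinarith
  have h0N : (0 : EuclideanSpace ℝ (Fin u) × EuclideanSpace ℝ (Fin s)) ∈ N := by
    rw [hNdef]
    constructor <;> simp
  have hpne : p ≠ 0 := by
    intro h0
    rw [h0] at hQp
    simp at hQp
    linarith
  have := hcone p hpN 0 h0N hpne
  rw [hf0, sub_zero, sub_zero] at this
  obtain ⟨hcs0, hcsm⟩ := hcstar
  have : m * (α * ‖p.1‖ ^ 2 - β * ‖p.2‖ ^ 2) ≥ m * c :=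
    mul_le_mul_of_nonneg_left hQp hm.le
  show α * ‖(f p).1‖ ^ 2 - β * ‖(f p).2‖ ^ 2 > cstar
  nlinarith [hcone p hpN 0 h0N hpne]
end

section
/- Let Q(x,y) = α‖x‖² − β‖y‖² with α,β > 0, with associated symmetric matrix 𝒬 (Q(p) = pᵀ𝒬p). Let C = [[A, ε₁],[ε₂, B]] be a block matrix with A a u×u matrix, B an s×s matrix. If xᵀ(A − ½(‖ε₁‖ + (β/α)‖ε₂‖)Id)x > c‖x‖² for all x ≠ 0, and yᵀ(B + ½(‖ε₂‖ + (α/β)‖ε₁‖)Id)y < c‖y‖² for all y ≠ 0, then for every p = (x,y) ≠ 0, pᵀ𝒬Cp > c pᵀ𝒬p. -/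
open scoped Matrix RealInnerProductSpace

/-- Euclidean operator norm of a (possibly rectangular) real matrix. -/
noncomputable def matOpNorm {m n : ℕ} (ε : Matrix (Fin m) (Fin n) ℝ) : ℝ :=
  ‖LinearMap.toContinuousLinearMap (Matrix.toEuclideanLin ε)‖

lemma abs_dot_le {m n : ℕ} (ε : Matrix (Fin m) (Fin n) ℝ) (x : Fin m → ℝ) (y : Fin n → ℝ) :
    |x ⬝ᵥ ε.mulVec y| ≤ matOpNorm ε / 2 * (x ⬝ᵥ x + y ⬝ᵥ y) := by
  set x' : EuclideanSpace ℝ (Fin m) := (WithLp.equiv 2 _).symm x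
  set y' : EuclideanSpace ℝ (Fin n) := (WithLp.equiv 2 _).symm y
  have h1 : x ⬝ᵥ ε.mulVec y = ⟪x', Matrix.toEuclideanLin ε y'⟫ := by
    rw [show Matrix.toEuclideanLin ε y' = (WithLp.equiv 2 _).symm (ε.mulVec y) from rfl]
    rw [EuclideanSpace.inner_eq_star_dotProduct]
    simp [dotProduct, mul_comm, x', y']
  have h2 := abs_real_inner_le_norm x' (Matrix.toEuclideanLin ε y')
  have h3 : ‖Matrix.toEuclideanLin ε y'‖ ≤ matOpNorm ε * ‖y'‖ :=
    (LinearMap.toContinuousLinearMap (Matrix.toEuclideanLin ε)).le_opNorm y'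
  have hN : 0 ≤ matOpNorm ε := norm_nonneg _
  have hx : x ⬝ᵥ x = ‖x'‖ ^ 2 := by
    rw [← real_inner_self_eq_norm_sq, EuclideanSpace.inner_eq_star_dotProduct]
    simp [dotProduct, mul_comm, x', y']
  have hy : y ⬝ᵥ y = ‖y'‖ ^ 2 := by
    rw [← real_inner_self_eq_norm_sq, EuclideanSpace.inner_eq_star_dotProduct]
    simp [dotProduct, mul_comm, x', y']
  rw [h1, hx, hy]
  nlinarith [norm_nonneg x', norm_nonneg y', sq_nonneg (‖x'‖ - ‖y'‖),
    mul_le_mul_of_nonneg_left h3 (norm_nonneg x')]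

set_option maxHeartbeats 1000000
theorem stmt_17 (u s : ℕ) (α β c : ℝ) (hα : 0 < α) (hβ : 0 < β)
    (A : Matrix (Fin u) (Fin u) ℝ) (B : Matrix (Fin s) (Fin s) ℝ)
    (ε₁ : Matrix (Fin u) (Fin s) ℝ) (ε₂ : Matrix (Fin s) (Fin u) ℝ)
    (hA : ∀ x : Fin u → ℝ, x ≠ 0 →
      x ⬝ᵥ (A - (((matOpNorm ε₁ + (β / α) * matOpNorm ε₂) / 2) • 1)).mulVec x >
        c * (x ⬝ᵥ x))
    (hB : ∀ y : Fin s → ℝ, y ≠ 0 →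
      y ⬝ᵥ (B + (((matOpNorm ε₂ + (α / β) * matOpNorm ε₁) / 2) • 1)).mulVec y <
        c * (y ⬝ᵥ y)) :
    ∀ p : Fin u ⊕ Fin s → ℝ, p ≠ 0 →
      p ⬝ᵥ (Matrix.fromBlocks (α • 1) 0 0 ((-β) • 1)).mulVec
          ((Matrix.fromBlocks A ε₁ ε₂ B).mulVec p) >
        c * (p ⬝ᵥ (Matrix.fromBlocks (α • 1) 0 0 ((-β) • 1)).mulVec p) := by
  have hN1 : 0 ≤ matOpNorm ε₁ := norm_nonneg _
  have hN2 : 0 ≤ matOpNorm ε₂ := norm_nonneg _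
  set N1 := matOpNorm ε₁ with hN1def
  set N2 := matOpNorm ε₂ with hN2def
  -- reformulated hypotheses
  have hA' : ∀ x : Fin u → ℝ, x ≠ 0 →
      x ⬝ᵥ A.mulVec x - (N1 + (β/α)*N2)/2 * (x ⬝ᵥ x) > c * (x ⬝ᵥ x) := by
    intro x hx
    have := hA x hx
    simpa [Matrix.sub_mulVec, Matrix.smul_mulVec, Matrix.one_mulVec,
      dotProduct_sub, dotProduct_smul, smul_eq_mul] using this
  have hB' : ∀ y : Fin s → ℝ, y ≠ 0 →
      y ⬝ᵥ B.mulVec y + (N2 + (α/β)*N1)/2 * (y ⬝ᵥ y) < c * (y ⬝ᵥ y) := by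
    intro y hy
    have := hB y hy
    simpa [Matrix.add_mulVec, Matrix.smul_mulVec, Matrix.one_mulVec,
      dotProduct_add, dotProduct_smul, smul_eq_mul] using this
  intro p hp
  set x : Fin u → ℝ := p ∘ Sum.inl with hxdef
  set y : Fin s → ℝ := p ∘ Sum.inr with hydef
  have hpe : p = Sum.elim x y := by ext i; cases i <;> rfl
  have hxy : x ≠ 0 ∨ y ≠ 0 := by
    by_contra h
    push_neg at h
    apply hp
    rw [hpe, h.1, h.2]
    ext i; cases i <;> rfl
  have hm2 : ∀ (v : Fin u → ℝ) (w : Fin s → ℝ),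
      (Matrix.fromBlocks (α • 1) (0 : Matrix (Fin u) (Fin s) ℝ)
        (0 : Matrix (Fin s) (Fin u) ℝ) ((-β) • 1)).mulVec (Sum.elim v w)
        = Sum.elim (α • v) ((-β) • w) := by
    intro v w
    rw [Matrix.fromBlocks_mulVec]
    simp [Matrix.smul_mulVec, Matrix.one_mulVec, Matrix.neg_mulVec]
  have hm1 : (Matrix.fromBlocks A ε₁ ε₂ B).mulVec (Sum.elim x y)
      = Sum.elim (A.mulVec x + ε₁.mulVec y) (ε₂.mulVec x + B.mulVec y) := by
    rw [Matrix.fromBlocks_mulVec]; simp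
  rw [hpe, hm1, hm2, hm2, sumElim_dotProduct_sumElim,
    sumElim_dotProduct_sumElim]
  simp only [dotProduct_smul, smul_eq_mul, dotProduct_add]
  -- scalar abbreviations
  have key1 := abs_dot_le ε₁ x y
  have key2 := abs_dot_le ε₂ y x
  rw [abs_le] at key1 key2
  have hxx : 0 ≤ x ⬝ᵥ x := Finset.sum_nonneg fun i _ => mul_self_nonneg _
  have hyy : 0 ≤ y ⬝ᵥ y := Finset.sum_nonneg fun i _ => mul_self_nonneg _
  have hdivA : α * ((N1 + (β/α)*N2)/2) = (α*N1 + β*N2)/2 := by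
    field_simp
  have hdivB : β * ((N2 + (α/β)*N1)/2) = (β*N2 + α*N1)/2 := by
    field_simp
  -- the A-side inequality (strict iff x ≠ 0)
  have HA : α * (x ⬝ᵥ A.mulVec x) ≥ c * α * (x ⬝ᵥ x) + (α*N1 + β*N2)/2 * (x ⬝ᵥ x) := by
    rcases eq_or_ne x 0 with hx0 | hx0
    · simp [hx0]
    · have := hA' x hx0
      nlinarith [this, hα]
  have HB : -(β * (y ⬝ᵥ B.mulVec y)) ≥ -(c * β * (y ⬝ᵥ y)) + (β*N2 + α*N1)/2 * (y ⬝ᵥ y) := by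
    rcases eq_or_ne y 0 with hy0 | hy0
    · simp [hy0]
    · have := hB' y hy0
      nlinarith [this, hβ]
  have HAs : x ≠ 0 → α * (x ⬝ᵥ A.mulVec x) > c * α * (x ⬝ᵥ x) + (α*N1 + β*N2)/2 * (x ⬝ᵥ x) := by
    intro hx0
    have := hA' x hx0
    nlinarith [this, hα]
  have HBs : y ≠ 0 → -(β * (y ⬝ᵥ B.mulVec y)) > -(c * β * (y ⬝ᵥ y)) + (β*N2 + α*N1)/2 * (y ⬝ᵥ y) := by
    intro hy0
    have := hB' y hy0
    nlinarith [this, hβ]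
  have HE1 : α * (x ⬝ᵥ ε₁.mulVec y) ≥ -(α * N1 / 2 * (x ⬝ᵥ x + y ⬝ᵥ y)) := by
    nlinarith [key1.1, hα]
  have HE2 : -(β * (y ⬝ᵥ ε₂.mulVec x)) ≥ -(β * N2 / 2 * (y ⬝ᵥ y + x ⬝ᵥ x)) := by
    nlinarith [key2.2, hβ]
  rcases hxy with hx0 | hy0
  · have := HAs hx0
    linarith [HB, HE1, HE2]
  · have := HBs hy0
    linarith [HA, HE1, HE2]
end
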